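/- arXiv:1003.0929 — 2 statements merged into one kernel-verified Lean document; each statement's English description precedes it below -/
import Mathlib

section
/- Consider a critically loaded system (Leff(ρ) = 1) and any fluid model solution on [0,T] (i.e., a trajectory satisfying only the algorithm-independent fluid equations) with flow-count and queue-length components (n(·), q(·)). Then for every t ∈ [0,T], the instantaneous cost is bounded below by the effective cost of the initial state: c*(n(0), q(0)) ≤ c(n(t), q(t)). -/
open Matrix Filter

/-- Network data: queues `E`, flow types `F`, routing matrix, schedule set,
ingress map, arrival/departure parameters. -/
structure Network (E F : Type*) [Fintype E] [Fintype F] [DecidableEq E] where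
  R : Matrix E E ℝ
  S : Finset (E → ℝ)
  iota : F → E
  ν : F → ℝ
  μ : F → ℝ
  C : ℝ
  hR01 : ∀ e e', R e e' = 0 ∨ R e e' = 1
  hRrow : ∀ e e₁ e₂, R e e₁ ≠ 0 → R e e₂ ≠ 0 → e₁ = e₂
  hRnil : IsNilpotent R
  hS01 : ∀ σ ∈ S, ∀ e, σ e = 0 ∨ σ e = 1
  hS0 : (0 : E → ℝ) ∈ S
  hSmono : ∀ σ ∈ S, ∀ σ' : E → ℝ, (∀ e, σ' e = 0 ∨ σ' e = 1) → (∀ e, σ' e ≤ σ e) → σ' ∈ S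
  hSsingle : ∀ e : E, (fun e' => if e' = e then (1 : ℝ) else 0) ∈ S
  hν : ∀ f, 0 < ν f
  hμ0 : ∀ f, 0 < μ f
  hμ1 : ∀ f, μ f < 1
  hC : ∀ f, ν f / μ f < C

namespace Network

variable {E F : Type*} [Fintype E] [Fintype F] [DecidableEq E] (N : Network E F)

/-- offered load `ρ_f = ν_f / μ_f`. -/
noncomputable def rho : F → ℝ := fun f => N.ν f / N.μ f

/-- `Ξ = (I - Rᵀ)⁻¹`. -/
noncomputable def Xi : Matrix E E ℝ := (1 - N.R.transpose)⁻¹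

/-- ingress matrix `Γ`. -/
noncomputable def Gam : Matrix E F ℝ := Matrix.of fun e f => if N.iota f = e then (1 : ℝ) else 0

/-- implied load `λ = Ξ Γ ρ`. -/
noncomputable def lamv : E → ℝ := N.Xi *ᵥ (N.Gam *ᵥ N.rho)

/-- `Π s`, the vector of service rates induced by schedule weights `s`. -/
def PiV (s : (E → ℝ) → ℝ) : E → ℝ := fun e => ∑ σ ∈ N.S, s σ * σ e

/-- the primal LP value `PRIMAL(l)`. -/
noncomputable def PRIMAL (l : E → ℝ) : ℝ :=
  sInf { v | ∃ s : (E → ℝ) → ℝ, (∀ σ, 0 ≤ s σ) ∧ (∀ e, l e ≤ N.PiV s e) ∧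
    v = ∑ σ ∈ N.S, s σ }

/-- effective load `Leff(ρ) = PRIMAL(ΞΓρ)`. -/
noncomputable def Leff : ℝ := N.PRIMAL N.lamv

/-- feasibility for the dual LP. -/
def dualFeasible (ζ : E → ℝ) : Prop :=
  (∀ e, 0 ≤ ζ e) ∧ ∀ σ ∈ N.S, ∑ e, ζ e * σ e ≤ 1

/-- the dual LP value `DUAL(l)`. -/
noncomputable def DUAL (l : E → ℝ) : ℝ :=
  sSup { v | ∃ ζ : E → ℝ, N.dualFeasible ζ ∧ v = ∑ e, l e * ζ e }

/-- `CR(ρ)`: the critical virtual resources (optimal solutions of `DUAL(ΞΓρ)`). -/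
def CR : Set (E → ℝ) :=
  { ζ | N.dualFeasible ζ ∧ ∑ e, N.lamv e * ζ e = N.DUAL N.lamv }

/-- `CR*(ρ)`: extreme points of `CR(ρ)`. -/
noncomputable def CRstar : Set (E → ℝ) := Set.extremePoints ℝ N.CR

/-- workload `w_ζ(n,q) = ζᵀ Ξ [q + Γ diag(μ)⁻¹ n]`. -/
noncomputable def workload (ζ : E → ℝ) (n : F → ℝ) (q : E → ℝ) : ℝ :=
  ∑ e, ζ e * (N.Xi *ᵥ (q + N.Gam *ᵥ fun f => n f / N.μ f)) e

/-- cost `c(n,q) = Σ_f n_f/μ_f + Σ_e q_e`. -/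
noncomputable def cost (n : F → ℝ) (q : E → ℝ) : ℝ :=
  ∑ f, n f / N.μ f + ∑ e, q e

/-- Lyapunov function `L_α(n,q)`. -/
noncomputable def Lyap (α : ℝ) (n : F → ℝ) (q : E → ℝ) : ℝ :=
  ∑ f, n f ^ (1 + α) / (N.μ f * N.rho f ^ α) + ∑ e, q e ^ (1 + α)

/-- back-pressure weight of a schedule `σ`: `σᵀ (I - R) q^α`. -/
noncomputable def weight (α : ℝ) (q : E → ℝ) (σ : E → ℝ) : ℝ :=
  ∑ e, σ e * ((1 - N.R) *ᵥ fun e' => q e' ^ α) e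

theorem S_nonempty : N.S.Nonempty := ⟨0, N.hS0⟩

/-- the maximum back-pressure weight. -/
noncomputable def maxWeight (α : ℝ) (q : E → ℝ) : ℝ :=
  N.S.sup' N.S_nonempty (N.weight α q)

/-- feasibility for problem `bALGD(n,q)`. -/
def bALGDFeas (n : F → ℝ) (q : E → ℝ) (p : (F → ℝ) × (E → ℝ)) : Prop :=
  (∀ f, 0 ≤ p.1 f) ∧ (∀ e, 0 ≤ p.2 e) ∧
    ∀ ζ ∈ N.CRstar, N.workload ζ n q ≤ N.workload ζ p.1 p.2

/-- optimality for problem `bALGD(n,q)`. -/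
def bALGDOpt (α : ℝ) (n : F → ℝ) (q : E → ℝ) (p : (F → ℝ) × (E → ℝ)) : Prop :=
  N.bALGDFeas n q p ∧ ∀ p', N.bALGDFeas n q p' → N.Lyap α p.1 p.2 ≤ N.Lyap α p'.1 p'.2

/-- the lifting map `Δ`: the unique optimal solution of `bALGD(n,q)`. -/
noncomputable def lift (α : ℝ) (p : (F → ℝ) × (E → ℝ)) : (F → ℝ) × (E → ℝ) :=
  letI := Classical.dec (∃! p', N.bALGDOpt α p.1 p.2 p')
  if h : ∃! p', N.bALGDOpt α p.1 p.2 p' then h.choose else p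

/-- the effective cost `c*(n,q)`. -/
noncomputable def effCost (n : F → ℝ) (q : E → ℝ) : ℝ :=
  sInf { v | ∃ p : (F → ℝ) × (E → ℝ), N.bALGDFeas n q p ∧ v = N.cost p.1 p.2 }

/-- the balance factor `γ(ρ)`. -/
noncomputable def balance : ℝ :=
  sInf { v | ∃ (n : F → ℝ) (q : E → ℝ) (p : (F → ℝ) × (E → ℝ)),
    (∀ f, 0 ≤ n f) ∧ (∀ e, 0 ≤ q e) ∧ N.bALGDFeas n q p ∧ N.cost n q = 1 ∧
    v = N.cost p.1 p.2 }

/-- the scheduling capacity region `Λ`. -/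
def LamSet : Set (E → ℝ) :=
  { l | (∀ e, 0 ≤ l e) ∧ ∃ s : (E → ℝ) → ℝ, (∀ σ, 0 ≤ s σ) ∧
    (∀ e, l e ≤ N.PiV s e) ∧ ∑ σ ∈ N.S, s σ ≤ 1 }

end Network

/-- ℓ1-distance between two states. -/
noncomputable def dist1 {E F : Type*} [Fintype E] [Fintype F]
    (p p' : (F → ℝ) × (E → ℝ)) : ℝ :=
  ∑ f, |p.1 f - p'.1 f| + ∑ e, |p.2 e - p'.2 e|

/-- A fluid model solution on `[0,T]` (algorithm-independent equations (F1)-(F8)). -/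
structure FMS {E F : Type*} [Fintype E] [Fintype F] [DecidableEq E]
    (N : Network E F) (T : ℝ) where
  q : ℝ → E → ℝ
  z : ℝ → E → ℝ
  n : ℝ → F → ℝ
  s : ℝ → (E → ℝ) → ℝ
  xbar : ℝ → F → ℝ
  fa : ℝ → F → ℝ
  d : ℝ → F → ℝ
  a : ℝ → F → ℝ
  lip_q : ∀ e, ∃ K : NNReal, LipschitzOnWith K (fun t => q t e) (Set.Icc 0 T)
  lip_z : ∀ e, ∃ K : NNReal, LipschitzOnWith K (fun t => z t e) (Set.Icc 0 T)
  lip_n : ∀ f, ∃ K : NNReal, LipschitzOnWith K (fun t => n t f) (Set.Icc 0 T)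
  lip_s : ∀ σ, ∃ K : NNReal, LipschitzOnWith K (fun t => s t σ) (Set.Icc 0 T)
  lip_xbar : ∀ f, ∃ K : NNReal, LipschitzOnWith K (fun t => xbar t f) (Set.Icc 0 T)
  lip_fa : ∀ f, ∃ K : NNReal, LipschitzOnWith K (fun t => fa t f) (Set.Icc 0 T)
  lip_d : ∀ f, ∃ K : NNReal, LipschitzOnWith K (fun t => d t f) (Set.Icc 0 T)
  lip_a : ∀ f, ∃ K : NNReal, LipschitzOnWith K (fun t => a t f) (Set.Icc 0 T)
  nonneg_q : ∀ t ∈ Set.Icc 0 T, ∀ e, 0 ≤ q t e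
  nonneg_z : ∀ t ∈ Set.Icc 0 T, ∀ e, 0 ≤ z t e
  nonneg_n : ∀ t ∈ Set.Icc 0 T, ∀ f, 0 ≤ n t f
  nonneg_s : ∀ t ∈ Set.Icc 0 T, ∀ σ, 0 ≤ s t σ
  supp_s : ∀ t ∈ Set.Icc 0 T, ∀ σ ∉ N.S, s t σ = 0
  nonneg_xbar : ∀ t ∈ Set.Icc 0 T, ∀ f, 0 ≤ xbar t f
  nonneg_fa : ∀ t ∈ Set.Icc 0 T, ∀ f, 0 ≤ fa t f
  nonneg_d : ∀ t ∈ Set.Icc 0 T, ∀ f, 0 ≤ d t f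
  nonneg_a : ∀ t ∈ Set.Icc 0 T, ∀ f, 0 ≤ a t f
  eq_n : ∀ t ∈ Set.Icc 0 T, ∀ f, n t f = n 0 f + fa t f - d t f
  eq_fa : ∀ t ∈ Set.Icc 0 T, ∀ f, fa t f = N.ν f * t
  eq_d : ∀ t ∈ Set.Icc 0 T, ∀ f, d t f = N.μ f * xbar t f
  eq_q : ∀ t ∈ Set.Icc 0 T, ∀ e, q t e = q 0 e
      - ((1 - N.R.transpose) *ᵥ N.PiV (s t)) e
      + ((1 - N.R.transpose) *ᵥ z t) e
      + (N.Gam *ᵥ a t) e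
  eq_a : ∀ t ∈ Set.Icc 0 T, ∀ f, a t f = xbar t f
  eq_s : ∀ t ∈ Set.Icc 0 T, ∑ σ ∈ N.S, s t σ = t
  mono_z : ∀ t₁ ∈ Set.Icc 0 T, ∀ t₂ ∈ Set.Icc 0 T, t₁ ≤ t₂ → ∀ e, z t₁ e ≤ z t₂ e
  mono_s : ∀ t₁ ∈ Set.Icc 0 T, ∀ t₂ ∈ Set.Icc 0 T, t₁ ≤ t₂ → ∀ σ, s t₁ σ ≤ s t₂ σ
  mono_xbar : ∀ t₁ ∈ Set.Icc 0 T, ∀ t₂ ∈ Set.Icc 0 T, t₁ ≤ t₂ → ∀ f, xbar t₁ f ≤ xbar t₂ f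

namespace FMS

variable {E F : Type*} [Fintype E] [Fintype F] [DecidableEq E] {N : Network E F} {T : ℝ}

/-- a regular point: all components are differentiable at `t ∈ (0,T)`. -/
def Regular (Φ : FMS N T) (t : ℝ) : Prop :=
  t ∈ Set.Ioo 0 T ∧
  (∀ e, DifferentiableAt ℝ (fun u => Φ.q u e) t) ∧
  (∀ e, DifferentiableAt ℝ (fun u => Φ.z u e) t) ∧
  (∀ f, DifferentiableAt ℝ (fun u => Φ.n u f) t) ∧
  (∀ σ, DifferentiableAt ℝ (fun u => Φ.s u σ) t) ∧
  (∀ f, DifferentiableAt ℝ (fun u => Φ.xbar u f) t) ∧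
  (∀ f, DifferentiableAt ℝ (fun u => Φ.fa u f) t) ∧
  (∀ f, DifferentiableAt ℝ (fun u => Φ.d u f) t) ∧
  (∀ f, DifferentiableAt ℝ (fun u => Φ.a u f) t)

/-- the instantaneous rate `x_f(t) = (d/dt) x̄_f(t)`. -/
noncomputable def rate (Φ : FMS N T) (t : ℝ) (f : F) : ℝ := deriv (fun u => Φ.xbar u f) t

/-- the α-fair objective `x^{1-α} n^α/(1-α) - q^α x`. -/
noncomputable def obj (α nf qf x : ℝ) : ℝ := x ^ (1 - α) * nf ^ α / (1 - α) - qf ^ α * x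

/-- the MWUM-α conditions (F9)-(F12). -/
def IsMWUM (Φ : FMS N T) (α : ℝ) : Prop :=
  (∀ t ∈ Set.Icc (0 : ℝ) T, ∀ e, Φ.z t e = 0) ∧
  ∀ t, Φ.Regular t →
    ((∀ f, (0 < Φ.n t f →
        Φ.rate t f ∈ Set.Icc (0 : ℝ) N.C ∧
        ∀ y ∈ Set.Icc (0 : ℝ) N.C,
          obj α (Φ.n t f) (Φ.q t (N.iota f)) y ≤
            obj α (Φ.n t f) (Φ.q t (N.iota f)) (Φ.rate t f)) ∧
      (Φ.n t f = 0 → Φ.rate t f = N.rho f)) ∧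
    (∀ π ∈ N.S, N.weight α (Φ.q t) π < N.maxWeight α (Φ.q t) →
        deriv (fun u => Φ.s u π) t = 0) ∧
    (∀ f, Φ.n t f = 0 → Φ.q t (N.iota f) = 0))

end FMS

/-!
Strong LP duality gives `PRIMAL(λ) ≤ DUAL(λ)`: if `PRIMAL(λ) > θ > 0`, then `θ⁻¹ λ` lies outside
the closed convex lower set generated by the schedules, and a separating hyperplane through it
is a nonnegative dual-feasible `ζ` with `ζᵀλ > θ`. Hence every critical resource `ζ ∈ CR(ρ)` of a
critically loaded network has `ζᵀλ = 1`. Along a fluid model solution the workload `w_ζ` gains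
`t ζᵀλ = t` from arrivals, loses `ζᵀ Π s(t) ≤ 𝟏ᵀ s(t) = t` to service, and gains `ζᵀ z(t) ≥ 0`
from idling, so `w_ζ(n(t), q(t)) ≥ w_ζ(n(0), q(0))`: the state `(n(t), q(t))` is feasible for the
problem defining `c*(n(0), q(0))`.
-/

theorem Convex.lowerClosure {𝕜 E : Type*} [Semiring 𝕜] [PartialOrder 𝕜] [AddCommMonoid E]
    [PartialOrder E] [IsOrderedAddMonoid E] [Module 𝕜 E] [PosSMulMono 𝕜 E] {K : Set E}
    (hK : Convex 𝕜 K) : Convex 𝕜 (lowerClosure K : Set E) := by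
  rintro x ⟨a, ha, hxa⟩ y ⟨b, hb, hyb⟩ s t hs ht hst
  exact ⟨s • a + t • b, hK ha hb hs ht hst,
    add_le_add (smul_le_smul_of_nonneg_left hxa hs) (smul_le_smul_of_nonneg_left hyb ht)⟩

theorem exists_nonneg_dotProduct_le_one_lt_of_notMem {ι : Type*} [Fintype ι] {K : Set (ι → ℝ)}
    (hconv : Convex ℝ K) (hclosed : IsClosed K) (hlower : IsLowerSet K) (h0 : 0 ∈ K)
    {x : ι → ℝ} (hx : x ∉ K) :
    ∃ ζ : ι → ℝ, 0 ≤ ζ ∧ (∀ y ∈ K, ζ ⬝ᵥ y ≤ 1) ∧ 1 < ζ ⬝ᵥ x := by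
  classical
  obtain ⟨f, u, hfK, hux⟩ := geometric_hahn_banach_closed_point hconv hclosed hx
  have hu : 0 < u := by simpa using hfK 0 h0
  set c : ι → ℝ := fun i => f fun j => if i = j then 1 else 0
  have hf (y : ι → ℝ) : f y = ∑ i, y i * c i :=
    LinearMap.pi_apply_eq_sum_univ (f : (ι → ℝ) →ₗ[ℝ] ℝ) y
  have hc : 0 ≤ c := by
    intro i
    by_contra! hci : c i < 0
    -- the point `(u / c i) • eᵢ ≤ 0` lies in `K`, yet `f` takes the value `u` there
    have hmem : (fun j => if i = j then u / c i else 0) ∈ K := by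
      refine hlower (fun j => ?_) h0
      split_ifs
      · exact (div_neg_of_pos_of_neg hu hci).le
      · exact le_rfl
    have := hfK _ hmem
    simp [hf, ite_mul, div_mul_cancel₀ _ hci.ne] at this
  have hζ (y : ι → ℝ) : (fun i => c i / u) ⬝ᵥ y = f y / u := by
    simp only [dotProduct, hf, Finset.sum_div]
    exact Finset.sum_congr rfl fun i _ => by ring
  refine ⟨fun i => c i / u, fun i => div_nonneg (hc i) hu.le, fun y hy => ?_, ?_⟩
  · rw [hζ, div_le_one hu]
    exact (hfK y hy).le
  · rwa [hζ, one_lt_div hu]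

namespace Network

variable {E F : Type*} [Fintype E] [Fintype F] [DecidableEq E] {N : Network E F}

theorem dualFeasible.le_one {ζ : E → ℝ} (hζ : N.dualFeasible ζ) (e : E) : ζ e ≤ 1 := by
  simpa [mul_ite] using hζ.2 _ (N.hSsingle e)

theorem dualFeasible.dotProduct_PiV_le {ζ : E → ℝ} (hζ : N.dualFeasible ζ)
    {s : (E → ℝ) → ℝ} (hs : ∀ σ ∈ N.S, 0 ≤ s σ) : ζ ⬝ᵥ N.PiV s ≤ ∑ σ ∈ N.S, s σ := by
  calc ζ ⬝ᵥ N.PiV s = ∑ σ ∈ N.S, s σ * ζ ⬝ᵥ σ := by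
        simp only [dotProduct, PiV, Finset.mul_sum]
        rw [Finset.sum_comm]
        exact Finset.sum_congr rfl fun σ _ => Finset.sum_congr rfl fun e _ => by ring
    _ ≤ ∑ σ ∈ N.S, s σ := Finset.sum_le_sum fun σ hσ =>
        mul_le_of_le_one_right (hs σ hσ) (hζ.2 σ hσ)

variable (N)

theorem bddAbove_dual_values (l : E → ℝ) :
    BddAbove { v | ∃ ζ : E → ℝ, N.dualFeasible ζ ∧ v = ∑ e, l e * ζ e } := by
  refine ⟨∑ e, |l e|, ?_⟩
  rintro v ⟨ζ, hζ, rfl⟩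
  refine Finset.sum_le_sum fun e _ => ?_
  calc l e * ζ e ≤ |l e| * ζ e := mul_le_mul_of_nonneg_right (le_abs_self _) (hζ.1 e)
    _ ≤ |l e| := mul_le_of_le_one_right (abs_nonneg _) (hζ.le_one e)

theorem le_DUAL {l ζ : E → ℝ} (hζ : N.dualFeasible ζ) : l ⬝ᵥ ζ ≤ N.DUAL l :=
  le_csSup (N.bddAbove_dual_values l) ⟨ζ, hζ, rfl⟩

theorem PRIMAL_le_of_le_smul {l c : E → ℝ} (hc : c ∈ convexHull ℝ (N.S : Set (E → ℝ)))
    {θ : ℝ} (hθ : 0 ≤ θ) (hl : l ≤ θ • c) : N.PRIMAL l ≤ θ := by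
  classical
  obtain ⟨w, hw0, hw1, rfl⟩ := Finset.mem_convexHull'.mp hc
  set s : (E → ℝ) → ℝ := fun σ => if σ ∈ N.S then θ * w σ else 0
  have hsS : ∀ σ ∈ N.S, s σ = θ * w σ := fun σ hσ => if_pos hσ
  refine csInf_le ⟨0, ?_⟩ ⟨s, fun σ => ?_, fun e => ?_, ?_⟩
  · rintro v ⟨s', hs', -, rfl⟩
    exact Finset.sum_nonneg fun σ _ => hs' σ
  · by_cases hσ : σ ∈ N.S
    · rw [hsS σ hσ]; exact mul_nonneg hθ (hw0 σ hσ)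
    · exact (if_neg hσ).ge
  · refine (hl e).trans_eq ?_
    simp only [PiV, Pi.smul_apply, Finset.sum_apply, smul_eq_mul, Finset.mul_sum]
    exact Finset.sum_congr rfl fun σ hσ => by rw [hsS σ hσ]; ring
  · rw [Finset.sum_congr rfl hsS, ← Finset.mul_sum, hw1, mul_one]

theorem PRIMAL_le_DUAL (l : E → ℝ) : N.PRIMAL l ≤ N.DUAL l := by
  set K : Set (E → ℝ) := ↑(lowerClosure (convexHull ℝ (N.S : Set (E → ℝ))))
  have hhull : IsCompact (convexHull ℝ (N.S : Set (E → ℝ))) :=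
    N.S.finite_toSet.isCompact_convexHull ℝ
  have hK0 : (0 : E → ℝ) ∈ K := subset_lowerClosure (subset_convexHull ℝ _ N.hS0)
  have hdual0 : 0 ≤ N.DUAL l := by
    simpa using N.le_DUAL (l := l) (ζ := 0) ⟨fun _ => le_rfl, fun σ _ => by simp⟩
  refine le_of_forall_lt fun c hc => ?_
  rcases lt_or_ge c 0 with hc0 | hc0
  · exact hc0.trans_le hdual0
  obtain ⟨θ, hcθ, hθP⟩ := exists_between hc
  have hθ : 0 < θ := hc0.trans_lt hcθ
  have hl : θ⁻¹ • l ∉ K := by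
    rintro ⟨a, ha, hla⟩
    have : l ≤ θ • a := by simpa [hθ.ne'] using smul_le_smul_of_nonneg_left hla hθ.le
    linarith [N.PRIMAL_le_of_le_smul ha hθ.le this]
  obtain ⟨ζ, hζ0, hζK, hζl⟩ := exists_nonneg_dotProduct_le_one_lt_of_notMem
    (convex_convexHull ℝ _).lowerClosure (hhull.isClosed.lowerClosure_pi hhull.isBounded.bddAbove)
    (lowerClosure _).lower hK0 hl
  have hfeas : N.dualFeasible ζ :=
    ⟨hζ0, fun σ hσ => hζK σ (subset_lowerClosure (subset_convexHull ℝ _ hσ))⟩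
  have : θ < l ⬝ᵥ ζ := by
    rwa [dotProduct_smul, smul_eq_mul, dotProduct_comm, lt_inv_mul_iff₀ hθ, mul_one] at hζl
  linarith [N.le_DUAL (l := l) hfeas]

theorem Xi_mul_one_sub_transpose : N.Xi * (1 - N.Rᵀ) = 1 := by
  have hunit : IsUnit (1 - N.Rᵀ) :=
    (Matrix.isNilpotent_transpose_iff.mpr N.hRnil).isUnit_one_sub
  exact nonsing_inv_mul _ ((isUnit_iff_isUnit_det _).mp hunit)

theorem cost_nonneg {n : F → ℝ} {q : E → ℝ} (hn : 0 ≤ n) (hq : 0 ≤ q) : 0 ≤ N.cost n q :=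
  add_nonneg (Finset.sum_nonneg fun f _ => div_nonneg (hn f) (N.hμ0 f).le)
    (Finset.sum_nonneg fun e _ => hq e)

theorem effCost_le_cost {n : F → ℝ} {q : E → ℝ} {p : (F → ℝ) × (E → ℝ)}
    (hp : N.bALGDFeas n q p) : N.effCost n q ≤ N.cost p.1 p.2 := by
  refine csInf_le ⟨0, ?_⟩ ⟨p, hp, rfl⟩
  rintro v ⟨p', ⟨hp'1, hp'2, -⟩, rfl⟩
  exact N.cost_nonneg hp'1 hp'2

theorem one_le_lamv_dotProduct (hcrit : N.Leff = 1) {ζ : E → ℝ} (hζ : ζ ∈ N.CR) :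
    1 ≤ N.lamv ⬝ᵥ ζ :=
  calc 1 = N.PRIMAL N.lamv := hcrit.symm
    _ ≤ N.DUAL N.lamv := N.PRIMAL_le_DUAL N.lamv
    _ = N.lamv ⬝ᵥ ζ := hζ.2.symm

end Network

namespace FMS

variable {E F : Type*} [Fintype E] [Fintype F] [DecidableEq E] {N : Network E F} {T : ℝ}
  (Φ : FMS N T) {t : ℝ}

theorem n_div_μ_eq (ht : t ∈ Set.Icc 0 T) (f : F) :
    Φ.n t f / N.μ f = Φ.n 0 f / N.μ f + t * N.rho f - Φ.a t f := by
  have hμ : N.μ f ≠ 0 := (N.hμ0 f).ne'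
  rw [Φ.eq_n t ht, Φ.eq_fa t ht, Φ.eq_d t ht, Φ.eq_a t ht, Network.rho]
  field_simp

theorem q_add_Gam_mulVec_eq (ht : t ∈ Set.Icc 0 T) :
    Φ.q t + N.Gam *ᵥ (fun f => Φ.n t f / N.μ f) =
      Φ.q 0 + N.Gam *ᵥ (fun f => Φ.n 0 f / N.μ f) + t • (N.Gam *ᵥ N.rho)
        - (1 - N.Rᵀ) *ᵥ (N.PiV (Φ.s t) - Φ.z t) := by
  have hn : (fun f => Φ.n t f / N.μ f) = (fun f => Φ.n 0 f / N.μ f) + t • N.rho - Φ.a t :=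
    funext (Φ.n_div_μ_eq ht)
  ext e
  rw [hn, mulVec_sub, mulVec_add, mulVec_smul, mulVec_sub]
  simp only [Pi.add_apply, Pi.sub_apply, Pi.smul_apply, Φ.eq_q t ht e]
  ring

theorem workload_eq (ht : t ∈ Set.Icc 0 T) (ζ : E → ℝ) :
    N.workload ζ (Φ.n t) (Φ.q t) = N.workload ζ (Φ.n 0) (Φ.q 0) + t * (N.lamv ⬝ᵥ ζ)
      - ζ ⬝ᵥ N.PiV (Φ.s t) + ζ ⬝ᵥ Φ.z t := by
  have hcancel (v : E → ℝ) : N.Xi *ᵥ ((1 - N.Rᵀ) *ᵥ v) = v := by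
    rw [mulVec_mulVec, N.Xi_mul_one_sub_transpose, one_mulVec]
  change ζ ⬝ᵥ _ = ζ ⬝ᵥ _ + _ - _ + _
  rw [Φ.q_add_Gam_mulVec_eq ht, mulVec_sub, mulVec_add, mulVec_smul, hcancel, dotProduct_sub,
    dotProduct_add, dotProduct_smul, dotProduct_sub, dotProduct_comm N.lamv, smul_eq_mul,
    Network.lamv]
  ring

theorem workload_le_workload (ht : t ∈ Set.Icc 0 T) {ζ : E → ℝ} (hζ : N.dualFeasible ζ)
    (hload : 1 ≤ N.lamv ⬝ᵥ ζ) :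
    N.workload ζ (Φ.n 0) (Φ.q 0) ≤ N.workload ζ (Φ.n t) (Φ.q t) := by
  have hservice : ζ ⬝ᵥ N.PiV (Φ.s t) ≤ t :=
    (hζ.dotProduct_PiV_le fun σ _ => Φ.nonneg_s t ht σ).trans_eq (Φ.eq_s t ht)
  have hidle : 0 ≤ ζ ⬝ᵥ Φ.z t := dotProduct_nonneg_of_nonneg hζ.1 (Φ.nonneg_z t ht)
  have harrival : t ≤ t * (N.lamv ⬝ᵥ ζ) := le_mul_of_one_le_right ht.1 hload
  rw [Φ.workload_eq ht]
  linarith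

end FMS

theorem cost_lower_bound_effective_cost_general
    {E F : Type*} [Fintype E] [Fintype F] [DecidableEq E]
    (N : Network E F) (hcrit : N.Leff = 1)
    (T : ℝ) (Φ : FMS N T)
    (t : ℝ) (ht : t ∈ Set.Icc 0 T) :
    N.effCost (Φ.n 0) (Φ.q 0) ≤ N.cost (Φ.n t) (Φ.q t) :=
  N.effCost_le_cost (p := (Φ.n t, Φ.q t)) ⟨Φ.nonneg_n t ht, Φ.nonneg_q t ht, fun _ hζ =>
    Φ.workload_le_workload ht hζ.1.1 (N.one_le_lamv_dotProduct hcrit hζ.1)⟩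

/-- Lower bound via effective cost: in a critically loaded system,
along any fluid model solution (any policy), the instantaneous cost is bounded
below by the effective cost of the initial state. -/
theorem cost_lower_bound_effective_cost
    {E F : Type*} [Fintype E] [Fintype F] [DecidableEq E]
    (N : Network E F) (hcrit : N.Leff = 1)
    (T : ℝ) (hT : 0 < T) (Φ : FMS N T)
    (t : ℝ) (ht : t ∈ Set.Icc 0 T) :
    N.effCost (Φ.n 0) (Φ.q 0) ≤ N.cost (Φ.n t) (Φ.q t) :=
  cost_lower_bound_effective_cost_general N hcrit T Φ t ht
end

section
/- Suppose the system is critically loaded (Leff(ρ) = 1) and ΞΓρ > 0 componentwise. Let (n,q) ∈ ℝ₊^ℱ × ℝ₊^ℰ satisfy (Γρ)ᵀ q^α = max_{π∈𝒮} πᵀ(I − R) q^α (where q^α is the componentwise α-th power) and n_f = ρ_f q_{ι(f)} for all f ∈ ℱ. Then (n,q) is a fixed point of the lifting map: Δ(n,q) = (n,q). -/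
open Matrix Filter

/-! Feasibility of `(n, q)` for `bALGD(n, q)` is trivial, and since `L_α` is convex it is optimal
as soon as the derivative of `L_α` at `(n, q)` is nonnegative in every feasible direction.
Because `n = ρ · q ∘ ι`, that derivative is `(1 + α)` times the increase of the workload
`w_b` with `b = (I - R) q^α`. The balance condition says `λᵀ b = max_σ σᵀ b`; with critical
load and `λ > 0` this forces `b ≥ 0` and makes `b / max_σ σᵀ b` an optimal dual solution, so
`b` is a nonnegative multiple of a point of `CR(ρ)`. By Krein–Milman `CR(ρ)` is the closed
convex hull of `CR*(ρ)`, on which the workload constraints of `bALGD` hold, so `w_b` does not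
decrease. -/

theorem IsCompact.subset_of_extremePoints_subset {V : Type*} [AddCommGroup V] [Module ℝ V]
    [TopologicalSpace V] [T2Space V] [IsTopologicalAddGroup V] [ContinuousSMul ℝ V]
    [LocallyConvexSpace ℝ V] {K T : Set V} (hK : IsCompact K) (hKc : Convex ℝ K)
    (hT : IsClosed T) (hTc : Convex ℝ T) (h : K.extremePoints ℝ ⊆ T) : K ⊆ T := by
  rw [← closure_convexHull_extremePoints hK hKc]
  exact closure_minimal (convexHull_min h hTc) hT

theorem Real.tangent_le_rpow_one_add {α x y : ℝ} (hα : 0 < α) (hx : 0 ≤ x) (hy : 0 ≤ y) :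
    x ^ (1 + α) + (1 + α) * x ^ α * (y - x) ≤ y ^ (1 + α) := by
  rcases hx.eq_or_lt with rfl | hx
  · rw [Real.zero_rpow (by positivity), Real.zero_rpow hα.ne']
    simpa using Real.rpow_nonneg hy _
  · -- Bernoulli's inequality for `(1 + s) ^ (1 + α)` with `1 + s = y / x`
    have hbern := one_add_mul_self_le_rpow_one_add (s := y / x - 1)
      (by linarith [div_nonneg hy hx.le]) (p := 1 + α) (by linarith)
    rw [add_sub_cancel, Real.div_rpow hy hx.le] at hbern
    have hxα : x ^ (1 + α) = x ^ α * x := by rw [add_comm, Real.rpow_add hx, Real.rpow_one]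
    have hxpos : 0 < x ^ (1 + α) := by positivity
    calc x ^ (1 + α) + (1 + α) * x ^ α * (y - x)
        = x ^ (1 + α) * (1 + (1 + α) * (y / x - 1)) := by rw [hxα]; field_simp
      _ ≤ x ^ (1 + α) * (y ^ (1 + α) / x ^ (1 + α)) := by gcongr
      _ = y ^ (1 + α) := by field_simp

namespace Network

variable {E F : Type*} [Fintype E] [Fintype F] [DecidableEq E] (N : Network E F)

lemma sched_nonneg {σ : E → ℝ} (hσ : σ ∈ N.S) (e : E) : 0 ≤ σ e := by
  rcases N.hS01 σ hσ e with h | h <;> simp [h]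

lemma single_mem_S (e : E) : Pi.single e 1 ∈ N.S := by
  convert N.hSsingle e using 1
  ext e'
  exact Pi.single_apply e 1 e'

lemma PRIMAL_set_nonempty (l : E → ℝ) :
    {v | ∃ s : (E → ℝ) → ℝ, (∀ σ, 0 ≤ s σ) ∧ (∀ e, l e ≤ N.PiV s e) ∧
      v = ∑ σ ∈ N.S, s σ}.Nonempty := by
  -- serve each queue `e` by its own singleton schedule, for time `max (l e) 0`
  let δ : E → E → ℝ := fun e => Pi.single e 1
  let s : (E → ℝ) → ℝ := fun σ => ∑ e, if σ = δ e then max (l e) 0 else 0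
  have hs : ∀ σ, 0 ≤ s σ := fun σ =>
    Finset.sum_nonneg fun e _ => by split_ifs <;> simp
  refine ⟨_, s, hs, fun e => ?_, rfl⟩
  calc l e ≤ max (l e) 0 := le_max_left _ _
    _ ≤ s (δ e) := by
        simpa using Finset.single_le_sum
          (f := fun e' => if δ e = δ e' then max (l e') 0 else 0)
          (fun e' _ => by split_ifs <;> simp) (Finset.mem_univ e)
    _ = s (δ e) * δ e e := by simp [δ]
    _ ≤ ∑ σ ∈ N.S, s σ * σ e := Finset.single_le_sum (f := fun σ => s σ * σ e)
        (fun σ hσ => mul_nonneg (hs σ) (N.sched_nonneg hσ e)) (N.single_mem_S e)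

/-- Weak LP duality, scaled: `ζ / W` is dual feasible. -/
lemma dotProduct_le_mul_PRIMAL {l ζ : E → ℝ} {W : ℝ} (hζ : ∀ e, 0 ≤ ζ e)
    (hW : ∀ σ ∈ N.S, ζ ⬝ᵥ σ ≤ W) : l ⬝ᵥ ζ ≤ W * N.PRIMAL l := by
  have hW0 : 0 ≤ W := by simpa using hW 0 N.hS0
  rw [PRIMAL, ← smul_eq_mul, ← Real.sInf_smul_of_nonneg hW0]
  refine le_csInf (N.PRIMAL_set_nonempty l).smul_set ?_
  rintro _ ⟨_, ⟨s, hs0, hsl, rfl⟩, rfl⟩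
  calc l ⬝ᵥ ζ ≤ ∑ e, N.PiV s e * ζ e :=
        Finset.sum_le_sum fun e _ => mul_le_mul_of_nonneg_right (hsl e) (hζ e)
    _ = ∑ σ ∈ N.S, s σ * (ζ ⬝ᵥ σ) := by
        simp only [PiV, dotProduct, Finset.sum_mul, Finset.mul_sum]
        rw [Finset.sum_comm]
        exact Finset.sum_congr rfl fun σ _ => Finset.sum_congr rfl fun e _ => by ring
    _ ≤ ∑ σ ∈ N.S, s σ * W :=
        Finset.sum_le_sum fun σ hσ => mul_le_mul_of_nonneg_left (hW σ hσ) (hs0 σ)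
    _ = W • ∑ σ ∈ N.S, s σ := by rw [← Finset.sum_mul, smul_eq_mul, mul_comm]

lemma mem_CR_of_dotProduct_eq_Leff {ζ : E → ℝ} (hζ : N.dualFeasible ζ)
    (h : N.lamv ⬝ᵥ ζ = N.Leff) : ζ ∈ N.CR := by
  have hgreatest : IsGreatest {v | ∃ ζ' : E → ℝ, N.dualFeasible ζ' ∧ v = N.lamv ⬝ᵥ ζ'}
      N.Leff := by
    refine ⟨⟨ζ, hζ, h.symm⟩, ?_⟩
    rintro _ ⟨ζ', hζ', rfl⟩
    simpa [Leff] using N.dotProduct_le_mul_PRIMAL hζ'.1 hζ'.2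
  exact ⟨hζ, h.trans hgreatest.csSup_eq.symm⟩

lemma CR_eq_iInter : N.CR = (⋂ e, {ζ | 0 ≤ ζ e}) ∩ (⋂ σ ∈ N.S, {ζ | ζ ⬝ᵥ σ ≤ 1}) ∩
    {ζ | N.lamv ⬝ᵥ ζ = N.DUAL N.lamv} := by
  ext ζ
  simp [CR, dualFeasible, dotProduct]

lemma convex_CR : Convex ℝ N.CR := by
  rw [CR_eq_iInter]
  refine ((convex_iInter fun e => ?_).inter (convex_iInter₂ fun σ _ => ?_)).inter ?_
  · exact convex_halfSpace_ge (LinearMap.proj e : (E → ℝ) →ₗ[ℝ] ℝ).isLinear 0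
  · exact convex_halfSpace_le ⟨fun x y => add_dotProduct x y σ, fun c x => smul_dotProduct c x σ⟩ 1
  · exact convex_hyperplane ⟨dotProduct_add N.lamv, fun c x => dotProduct_smul c N.lamv x⟩ _

lemma isClosed_CR : IsClosed N.CR := by
  rw [CR_eq_iInter]
  refine ((isClosed_iInter fun e => ?_).inter (isClosed_biInter fun σ _ => ?_)).inter ?_
  · exact isClosed_le continuous_const (continuous_apply e)
  · exact isClosed_le (continuous_id.dotProduct continuous_const) continuous_const
  · exact isClosed_eq (continuous_const.dotProduct continuous_id) continuous_const

lemma isCompact_CR : IsCompact N.CR := by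
  refine (isCompact_univ_pi fun _ => isCompact_Icc (a := (0 : ℝ)) (b := 1)).of_isClosed_subset
    N.isClosed_CR fun ζ hζ => Set.mem_univ_pi.2 fun e => ⟨hζ.1.1 e, ?_⟩
  simpa [Pi.single_apply] using hζ.1.2 _ (N.single_mem_S e)

lemma workload_le_of_mem_CR {n : F → ℝ} {q : E → ℝ} {p : (F → ℝ) × (E → ℝ)}
    (hp : N.bALGDFeas n q p) {ζ : E → ℝ} (hζ : ζ ∈ N.CR) :
    N.workload ζ n q ≤ N.workload ζ p.1 p.2 := by
  -- the workload is linear in `ζ`, so the constraints of `bALGD` on `CR*` cut out a closed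
  -- half-space, which contains `CR` by Krein–Milman
  set c := N.Xi *ᵥ (p.2 + N.Gam *ᵥ fun f => p.1 f / N.μ f) -
    N.Xi *ᵥ (q + N.Gam *ᵥ fun f => n f / N.μ f)
  have hsub : N.CR ⊆ {ζ | 0 ≤ ζ ⬝ᵥ c} :=
    N.isCompact_CR.subset_of_extremePoints_subset N.convex_CR
      (isClosed_le continuous_const (continuous_id.dotProduct continuous_const))
      (convex_halfSpace_ge ⟨fun x y => add_dotProduct x y c, fun a x => smul_dotProduct a x c⟩ 0)
      fun ζ hζ => by
        change 0 ≤ ζ ⬝ᵥ c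
        rw [dotProduct_sub, sub_nonneg]
        exact hp.2.2 ζ hζ
  have hζc : 0 ≤ ζ ⬝ᵥ c := hsub hζ
  rwa [dotProduct_sub, sub_nonneg] at hζc

lemma workload_smul (c : ℝ) (ζ : E → ℝ) (n : F → ℝ) (q : E → ℝ) :
    N.workload (c • ζ) n q = c * N.workload ζ n q := by
  simp [workload, Finset.mul_sum, mul_assoc]

lemma nonneg_of_dotProduct_eq {l b : E → ℝ} {W : ℝ} (hl : ∀ e, 0 < l e) (hP : N.PRIMAL l = 1)
    (hW : ∀ σ ∈ N.S, b ⬝ᵥ σ ≤ W) (hlb : l ⬝ᵥ b = W) (e : E) : 0 ≤ b e := by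
  -- the positive part of `b` obeys the same schedule bounds (restrict each schedule to
  -- `{b > 0}`), so weak duality caps `l ⬝ᵥ b⁺` at `W = l ⬝ᵥ b`
  set bp : E → ℝ := fun e => max (b e) 0
  have hbp : ∀ σ ∈ N.S, bp ⬝ᵥ σ ≤ W := by
    intro σ hσ
    have hσ' : (fun e => if 0 < b e then σ e else 0) ∈ N.S :=
      N.hSmono σ hσ _ (fun e => by split_ifs; exacts [N.hS01 σ hσ e, Or.inl rfl])
        (fun e => by split_ifs; exacts [le_rfl, N.sched_nonneg hσ e])
    calc bp ⬝ᵥ σ = b ⬝ᵥ (fun e => if 0 < b e then σ e else 0) :=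
          Finset.sum_congr rfl fun e _ => by
            simp only [bp]
            split_ifs with h
            · simp [h.le]
            · simp [not_lt.1 h]
      _ ≤ W := hW _ hσ'
  have hle : l ⬝ᵥ bp ≤ l ⬝ᵥ b := by
    simpa [hP, hlb] using N.dotProduct_le_mul_PRIMAL (l := l) (fun e => le_max_right (b e) 0) hbp
  by_contra! hneg
  refine hle.not_gt (Finset.sum_lt_sum
    (fun e _ => mul_le_mul_of_nonneg_left (le_max_left _ _) (hl e).le)
    ⟨e, Finset.mem_univ e, mul_lt_mul_of_pos_left ?_ (hl e)⟩)
  simpa [bp] using hneg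

lemma workload_le_of_dotProduct_eq (hcrit : N.Leff = 1) {b : E → ℝ} {W : ℝ}
    (hb : ∀ e, 0 ≤ b e) (hW : ∀ σ ∈ N.S, b ⬝ᵥ σ ≤ W) (hlb : N.lamv ⬝ᵥ b = W)
    {n : F → ℝ} {q : E → ℝ} {p : (F → ℝ) × (E → ℝ)} (hp : N.bALGDFeas n q p) :
    N.workload b n q ≤ N.workload b p.1 p.2 := by
  rcases (show 0 ≤ W by simpa using hW 0 N.hS0).eq_or_lt with rfl | hW0
  · have : b = 0 := funext fun e =>
      le_antisymm (by simpa using hW _ (N.single_mem_S e)) (hb e)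
    simp [this, workload]
  · have hζ : W⁻¹ • b ∈ N.CR := by
      refine N.mem_CR_of_dotProduct_eq_Leff ⟨fun e => ?_, fun σ hσ => ?_⟩ ?_
      · simpa using mul_nonneg (inv_nonneg.2 hW0.le) (hb e)
      · change (W⁻¹ • b) ⬝ᵥ σ ≤ 1
        rw [smul_dotProduct, smul_eq_mul, inv_mul_le_iff₀ hW0, mul_one]
        exact hW σ hσ
      · rw [dotProduct_smul, hlb, hcrit, smul_eq_mul, inv_mul_cancel₀ hW0.ne']
    have hscale : ∀ n q, N.workload b n q = W * N.workload (W⁻¹ • b) n q := fun n q => by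
      rw [workload_smul, mul_inv_cancel_left₀ hW0.ne']
    rw [hscale, hscale]
    exact mul_le_mul_of_nonneg_left (N.workload_le_of_mem_CR hp hζ) hW0.le

lemma one_sub_transpose_mul_Xi : (1 - N.Rᵀ) * N.Xi = 1 := by
  obtain ⟨k, hk⟩ := N.hRnil
  have hnil : IsNilpotent N.Rᵀ := ⟨k, by rw [← transpose_pow, hk, transpose_zero]⟩
  exact mul_nonsing_inv _ ((isUnit_iff_isUnit_det _).1 hnil.isUnit_one_sub)

lemma one_sub_mulVec_vecMul_Xi (v : E → ℝ) : ((1 - N.R) *ᵥ v) ᵥ* N.Xi = v := by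
  rw [← vecMul_transpose, transpose_sub, transpose_one, vecMul_vecMul,
    one_sub_transpose_mul_Xi, vecMul_one]

lemma lamv_dotProduct_one_sub_mulVec (v : E → ℝ) :
    N.lamv ⬝ᵥ ((1 - N.R) *ᵥ v) = (N.Gam *ᵥ N.rho) ⬝ᵥ v := by
  rw [dotProduct_mulVec, ← mulVec_transpose, transpose_sub, transpose_one, lamv, mulVec_mulVec,
    one_sub_transpose_mul_Xi, one_mulVec]

lemma dotProduct_Gam_mulVec (y : E → ℝ) (x : F → ℝ) :
    y ⬝ᵥ (N.Gam *ᵥ x) = ∑ f, y (N.iota f) * x f := by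
  rw [dotProduct_mulVec]
  simp [dotProduct, vecMul, Gam]

lemma workload_one_sub_mulVec (v : E → ℝ) (n : F → ℝ) (q : E → ℝ) :
    N.workload ((1 - N.R) *ᵥ v) n q = ∑ f, v (N.iota f) * (n f / N.μ f) + ∑ e, v e * q e := by
  change _ ⬝ᵥ _ = _
  rw [dotProduct_mulVec, one_sub_mulVec_vecMul_Xi, dotProduct_add, dotProduct_Gam_mulVec,
    add_comm]
  rfl

lemma Lyap_add_le {α : ℝ} (hα : 0 < α) {n n' : F → ℝ} {q q' : E → ℝ} (hq : ∀ e, 0 ≤ q e)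
    (hnq : ∀ f, n f = N.rho f * q (N.iota f)) (hn' : ∀ f, 0 ≤ n' f) (hq' : ∀ e, 0 ≤ q' e) :
    N.Lyap α n q + (1 + α) * (N.workload ((1 - N.R) *ᵥ fun e => q e ^ α) n' q' -
      N.workload ((1 - N.R) *ᵥ fun e => q e ^ α) n q) ≤ N.Lyap α n' q' := by
  have hflow : ∀ f, n f ^ (1 + α) / (N.μ f * N.rho f ^ α) +
      (1 + α) * (q (N.iota f) ^ α * (n' f / N.μ f - n f / N.μ f)) ≤
      n' f ^ (1 + α) / (N.μ f * N.rho f ^ α) := by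
    intro f
    have hρ : 0 < N.rho f := div_pos (N.hν f) (N.hμ0 f)
    have hμ : 0 < N.μ f := N.hμ0 f
    have hn : 0 ≤ n f := by rw [hnq]; exact mul_nonneg hρ.le (hq _)
    -- at `n = ρ q ∘ ι` the flow term has gradient `(1 + α) q_ι ^ α / μ`
    have hgrad : q (N.iota f) ^ α = n f ^ α / N.rho f ^ α := by
      rw [hnq, Real.mul_rpow hρ.le (hq _)]
      field_simp
    calc n f ^ (1 + α) / (N.μ f * N.rho f ^ α) +
          (1 + α) * (q (N.iota f) ^ α * (n' f / N.μ f - n f / N.μ f))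
        = (n f ^ (1 + α) + (1 + α) * n f ^ α * (n' f - n f)) / (N.μ f * N.rho f ^ α) := by
          rw [hgrad]
          field_simp
      _ ≤ n' f ^ (1 + α) / (N.μ f * N.rho f ^ α) := by
          gcongr
          exact Real.tangent_le_rpow_one_add hα hn (hn' f)
  have hqueue : ∀ e, q e ^ (1 + α) + (1 + α) * (q e ^ α * (q' e - q e)) ≤ q' e ^ (1 + α) :=
    fun e => by linarith [Real.tangent_le_rpow_one_add hα (hq e) (hq' e)]
  rw [workload_one_sub_mulVec, workload_one_sub_mulVec]
  calc _ = ∑ f, (n f ^ (1 + α) / (N.μ f * N.rho f ^ α) +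
          (1 + α) * (q (N.iota f) ^ α * (n' f / N.μ f - n f / N.μ f))) +
        ∑ e, (q e ^ (1 + α) + (1 + α) * (q e ^ α * (q' e - q e))) := by
        simp only [Lyap, mul_sub, Finset.sum_add_distrib, Finset.sum_sub_distrib, ← Finset.mul_sum]
        ring
    _ ≤ N.Lyap α n' q' :=
        add_le_add (Finset.sum_le_sum fun f _ => hflow f) (Finset.sum_le_sum fun e _ => hqueue e)

lemma lift_eq_self_of_bALGDOpt {α : ℝ} {p : (F → ℝ) × (E → ℝ)} (h : N.bALGDOpt α p.1 p.2 p) :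
    N.lift α p = p := by
  unfold lift
  split_ifs with huniq
  exacts [(huniq.choose_spec.2 p h).symm, rfl]

end Network

theorem invariant_conditions_imply_fixed_point_general
    {E F : Type*} [Fintype E] [Fintype F] [DecidableEq E]
    (N : Network E F) (α : ℝ) (hα : 0 < α)
    (hcrit : N.Leff = 1) (hpos : ∀ e, 0 < N.lamv e)
    (n : F → ℝ) (q : E → ℝ) (hn : ∀ f, 0 ≤ n f) (hq : ∀ e, 0 ≤ q e)
    (hbal : ∑ e, (N.Gam *ᵥ N.rho) e * q e ^ α = N.maxWeight α q)
    (hnq : ∀ f, n f = N.rho f * q (N.iota f)) :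
    N.lift α (n, q) = (n, q) := by
  set b := (1 - N.R) *ᵥ fun e => q e ^ α
  have hW : ∀ σ ∈ N.S, b ⬝ᵥ σ ≤ N.maxWeight α q := fun σ hσ => by
    rw [dotProduct_comm]
    exact Finset.le_sup' (N.weight α q) hσ
  have hlb : N.lamv ⬝ᵥ b = N.maxWeight α q := by
    rw [N.lamv_dotProduct_one_sub_mulVec]
    exact hbal
  have hb : ∀ e, 0 ≤ b e := N.nonneg_of_dotProduct_eq hpos hcrit hW hlb
  refine N.lift_eq_self_of_bALGDOpt ⟨⟨hn, hq, fun _ _ => le_rfl⟩, fun p hp => ?_⟩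
  calc N.Lyap α n q
      ≤ N.Lyap α n q + (1 + α) * (N.workload b p.1 p.2 - N.workload b n q) :=
        le_add_of_nonneg_right (mul_nonneg (by positivity)
          (sub_nonneg.2 (N.workload_le_of_dotProduct_eq hcrit hb hW hlb hp)))
    _ ≤ N.Lyap α p.1 p.2 := N.Lyap_add_le hα hq hnq hp.1 hp.2.1

/-- If `(Γρ)ᵀ q^α = max_{π∈S} πᵀ(I-R)q^α` and
`n_f = ρ_f q_{ι(f)}` for all `f`, then `(n,q)` is a fixed point of the lifting
map (critically loaded system, `ΞΓρ > 0`). -/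
theorem invariant_conditions_imply_fixed_point
    {E F : Type*} [Fintype E] [Fintype F] [DecidableEq E]
    (N : Network E F) (α : ℝ) (hα : 0 < α) (hα1 : α ≠ 1)
    (hcrit : N.Leff = 1) (hpos : ∀ e, 0 < N.lamv e)
    (n : F → ℝ) (q : E → ℝ) (hn : ∀ f, 0 ≤ n f) (hq : ∀ e, 0 ≤ q e)
    (hbal : ∑ e, (N.Gam *ᵥ N.rho) e * q e ^ α = N.maxWeight α q)
    (hnq : ∀ f, n f = N.rho f * q (N.iota f)) :
    N.lift α (n, q) = (n, q) :=
  invariant_conditions_imply_fixed_point_general N α hα hcrit hpos n q hn hq hbal hnq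
end
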